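/- Fix ν > 11/8 and K > 0. There exist constants C, c₀, ε₀ > 0 such that for every ε ∈ (0, ε₀], every real a with |a − 2ε| ≤ K·ε^ν, and all even integers N, f with 4 ≤ f ≤ N−2 and N − f > C/√ε, one has K_f/(1 − Z_{f−2})² ≤ 1/(1 + c₀·√ε). -/

import Mathlib

/-- `b_ε := (1+ε)(1+√ε)·√(ε²+2ε)` -/
noncomputable def bEps (ε : ℝ) : ℝ := (1 + ε) * (1 + Real.sqrt ε) * Real.sqrt (ε ^ 2 + 2 * ε)

/-- `c_ε := ((1+√ε)²−1)·(ε²+2ε)` -/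
noncomputable def cEps (ε : ℝ) : ℝ := ((1 + Real.sqrt ε) ^ 2 - 1) * (ε ^ 2 + 2 * ε)

/-- `K_f := 1/(4·(1 + a − 2b_ε/(N−f+1) − (1−c_ε)/(N−f+1)²))`. -/
noncomputable def Kf (ε a : ℝ) (N f : ℕ) : ℝ :=
  1 / (4 * (1 + a - 2 * bEps ε / ((N : ℝ) - (f : ℝ) + 1)
    - (1 - cEps ε) / ((N : ℝ) - (f : ℝ) + 1) ^ 2))

/-- `Z_{f−2} := [1/(4·(1 + a − 2b_ε/(N−f+3) − (1−c_ε)/(N−f+3)²))]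
· [2/(1 + √(η·a) − (b_ε/√(η·a))/(N−f+4−ε^Θ))]`, with `η = 1−√ε`, `Θ = min{2(ν−11/8), 1/4}`. -/
noncomputable def Zfm2 (ν ε a : ℝ) (N f : ℕ) : ℝ :=
  (1 / (4 * (1 + a - 2 * bEps ε / ((N : ℝ) - (f : ℝ) + 3)
      - (1 - cEps ε) / ((N : ℝ) - (f : ℝ) + 3) ^ 2)))
    * (2 / (1 + Real.sqrt ((1 - Real.sqrt ε) * a)
        - (bEps ε / Real.sqrt ((1 - Real.sqrt ε) * a))
            / ((N : ℝ) - (f : ℝ) + 4 - ε ^ (min (2 * (ν - 11/8)) (1/4)))))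

set_option maxHeartbeats 4000000 in
theorem stmt16 (ν K : ℝ) (hν : 11/8 < ν) (hK : 0 < K) :
    ∃ C > (0:ℝ), ∃ c₀ > (0:ℝ), ∃ ε₀ > (0:ℝ),
      ∀ ε : ℝ, 0 < ε → ε ≤ ε₀ →
      ∀ a : ℝ, |a - 2 * ε| ≤ K * ε ^ ν →
      ∀ N f : ℕ, Even N → Even f → 4 ≤ f → f + 2 ≤ N →
      C / Real.sqrt ε < (N : ℝ) - (f : ℝ) →
      Kf ε a N f / (1 - Zfm2 ν ε a N f) ^ 2 ≤ 1 / (1 + c₀ * Real.sqrt ε) := by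
  refine ⟨40, by norm_num, 1, by norm_num, min (1/100) ((1/(2*K))^8), by positivity, ?_⟩
  intro ε hε hεle a ha N f _ _ _ hfN hs
  have hε100 : ε ≤ 1/100 := le_trans hεle (min_le_left _ _)
  have hεK : ε ≤ (1/(2*K))^8 := le_trans hεle (min_le_right _ _)
  have hε1 : ε ≤ 1 := by linarith
  set t := Real.sqrt ε with htdef
  have ht_pos : 0 < t := Real.sqrt_pos.mpr hε
  have ht2 : t^2 = ε := Real.sq_sqrt hε.le
  have ht_le : t ≤ 1/10 := by
    have h1 : Real.sqrt ε ≤ Real.sqrt (1/100) := Real.sqrt_le_sqrt hε100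
    have h2 : Real.sqrt (1/100) = 1/10 := by
      rw [show (1/100:ℝ) = (1/10)^2 by norm_num, Real.sqrt_sq (by norm_num)]
    rw [htdef]; linarith
  -- a is close to 2ε
  have hKν : K * ε ^ ν ≤ ε / 2 := by
    have h1 : ε ^ ν ≤ ε ^ ((11:ℝ)/8) := Real.rpow_le_rpow_of_exponent_ge hε hε1 (by linarith)
    have h2 : ε ^ ((11:ℝ)/8) ≤ ε / (2*K) := by
      apply le_of_pow_le_pow_left₀ (n := 8) (by norm_num) (by positivity)
      have e1 : (ε ^ ((11:ℝ)/8))^(8:ℕ) = ε^(11:ℕ) := by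
        rw [← Real.rpow_natCast (ε ^ ((11:ℝ)/8)) 8, ← Real.rpow_mul hε.le,
          show (11:ℝ)/8 * (8:ℕ) = ((11:ℕ):ℝ) by norm_num, Real.rpow_natCast]
      rw [e1, div_pow]
      have h3 : ε^3 ≤ 1/(2*K)^8 := by
        calc ε^3 ≤ ε := by nlinarith [mul_nonneg hε.le hε.le, mul_nonneg (mul_nonneg hε.le hε.le) hε.le, hε1]
          _ ≤ (1/(2*K))^8 := hεK
          _ = 1/(2*K)^8 := by rw [one_div_pow]
      have h4 : ε^(11:ℕ) = ε^8 * ε^3 := by ring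
      rw [h4, div_eq_mul_one_div]
      exact mul_le_mul_of_nonneg_left h3 (by positivity)
    calc K * ε ^ ν ≤ K * (ε / (2*K)) :=
          mul_le_mul_of_nonneg_left (h1.trans h2) hK.le
      _ = ε / 2 := by field_simp
  have haabs := abs_le.mp ha
  have ha3 : 3*ε/2 ≤ a := by linarith [haabs.1]
  have ha5 : a ≤ 5*ε/2 := by linarith [haabs.2]
  -- bounds on bEps, cEps
  have hS0 : 0 ≤ Real.sqrt (ε^2 + 2*ε) := Real.sqrt_nonneg _
  have hS : Real.sqrt (ε^2 + 2*ε) ≤ 2*t := by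
    have h1 : Real.sqrt (ε^2+2*ε) ≤ Real.sqrt ((2*t)^2) := by
      apply Real.sqrt_le_sqrt; nlinarith
    rwa [Real.sqrt_sq (by positivity)] at h1
  have hb0 : 0 ≤ bEps ε := by
    unfold bEps; rw [← htdef]; positivity
  have hb_le : bEps ε ≤ 3*t := by
    unfold bEps; rw [← htdef]
    have h12 : (1+ε)*(1+t) ≤ 6/5 := by nlinarith
    calc (1+ε)*(1+t) * Real.sqrt (ε^2+2*ε) ≤ (6/5) * Real.sqrt (ε^2+2*ε) :=
          mul_le_mul_of_nonneg_right h12 hS0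
      _ ≤ (6/5) * (2*t) := by linarith
      _ ≤ 3*t := by linarith
  have hc0 : 0 ≤ cEps ε := by
    unfold cEps; rw [← htdef]
    exact mul_nonneg (by nlinarith [ht_pos.le]) (by nlinarith [hε.le])
  have hc1 : cEps ε ≤ 1 := by
    unfold cEps; rw [← htdef]
    have e1 : (1+t)^2 - 1 ≤ 1 := by nlinarith [ht_pos.le, ht_le]
    have e2 : ε^2 + 2*ε ≤ 1 := by nlinarith [hε100]
    calc ((1+t)^2 - 1) * (ε^2 + 2*ε) ≤ 1 * 1 :=
          mul_le_mul e1 e2 (by nlinarith [hε.le]) (by norm_num)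
      _ = 1 := by norm_num
  -- setup s
  simp only [Kf, Zfm2]
  set s := (N:ℝ) - (f:ℝ) with hsdef
  have hst : 40 < s * t := by
    rw [div_lt_iff₀ ht_pos] at hs; exact hs
  have hs_pos : 0 < s := lt_trans (div_pos (by norm_num) ht_pos) hs
  have h1u : 1/(s+1) ≤ t/40 := by
    rw [div_le_div_iff₀ (by linarith only [hs_pos]) (by norm_num)]
    nlinarith only [hst, ht_pos.le]
  have h1u3 : 1/(s+3) ≤ t/40 := by
    rw [div_le_div_iff₀ (by linarith only [hs_pos]) (by norm_num)]
    nlinarith only [hst, ht_pos.le]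
  -- D₁ ≥ 1
  have hD1 : 1 ≤ 1 + a - 2 * bEps ε / (s+1) - (1 - cEps ε) / (s+1)^2 := by
    have e1 : 2 * bEps ε / (s+1) ≤ 6*t*(t/40) := by
      rw [div_eq_mul_one_div]
      exact mul_le_mul (by linarith) h1u (by positivity) (by positivity)
    have e2 : (1 - cEps ε) / (s+1)^2 ≤ (t/40)^2 := by
      have h5 : 1/(s+1)^2 ≤ (t/40)^2 := by
        rw [show (1:ℝ)/(s+1)^2 = (1/(s+1))^2 by rw [one_div_pow]]
        exact pow_le_pow_left₀ (by positivity) h1u 2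
      calc (1 - cEps ε) / (s+1)^2 ≤ 1 / (s+1)^2 :=
            (div_le_div_iff_of_pos_right (by positivity)).mpr (by linarith)
          _ ≤ (t/40)^2 := h5
    nlinarith only [e1, e2, ha3, ht2]
  have hD2 : 1 ≤ 1 + a - 2 * bEps ε / (s+3) - (1 - cEps ε) / (s+3)^2 := by
    have e1 : 2 * bEps ε / (s+3) ≤ 6*t*(t/40) := by
      rw [div_eq_mul_one_div]
      exact mul_le_mul (by linarith) h1u3 (by positivity) (by positivity)
    have e2 : (1 - cEps ε) / (s+3)^2 ≤ (t/40)^2 := by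
      have h5 : 1/(s+3)^2 ≤ (t/40)^2 := by
        rw [show (1:ℝ)/(s+3)^2 = (1/(s+3))^2 by rw [one_div_pow]]
        exact pow_le_pow_left₀ (by positivity) h1u3 2
      calc (1 - cEps ε) / (s+3)^2 ≤ 1 / (s+3)^2 :=
            (div_le_div_iff_of_pos_right (by positivity)).mpr (by linarith)
          _ ≤ (t/40)^2 := h5
    nlinarith only [e1, e2, ha3, ht2]
  -- E bound
  have hηa : ε ≤ (1 - t) * a := by
    have h6 : (9:ℝ)/10 * a ≤ (1-t) * a :=
      mul_le_mul_of_nonneg_right (by linarith only [ht_le]) (by linarith only [ha3, hε.le])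
    linarith only [h6, ha3, hε.le]
  have hsq : t ≤ Real.sqrt ((1 - t) * a) := by
    rw [Real.le_sqrt ht_pos.le (le_trans hε.le hηa)]
    rw [ht2]; exact hηa
  have hq_pos : 0 < Real.sqrt ((1 - t) * a) := lt_of_lt_of_le ht_pos hsq
  have hbq : bEps ε / Real.sqrt ((1 - t) * a) ≤ 3 := by
    rw [div_le_iff₀ hq_pos]; linarith only [hb_le, hsq]
  have hbq0 : 0 ≤ bEps ε / Real.sqrt ((1 - t) * a) := div_nonneg hb0 hq_pos.le
  have hΘ : (0:ℝ) ≤ min (2 * (ν - 11/8)) (1/4) := le_min (by linarith only [hν]) (by norm_num)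
  have hεΘ : ε ^ (min (2 * (ν - 11/8)) (1/4)) ≤ 1 := Real.rpow_le_one hε.le hε1 hΘ
  have hεΘ0 : 0 < ε ^ (min (2 * (ν - 11/8)) (1/4)) := Real.rpow_pos_of_pos hε _
  set Θe := ε ^ (min (2 * (ν - 11/8)) (1/4)) with hΘedef
  clear_value Θe
  have hw_pos : 0 < s + 4 - Θe := by linarith only [hs_pos, hεΘ]
  have h1w : 1/(s + 4 - Θe) ≤ t/40 := by
    rw [div_le_div_iff₀ hw_pos (by norm_num)]
    nlinarith only [hst, mul_nonneg ht_pos.le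
      (show (0:ℝ) ≤ 4 - Θe by linarith only [hεΘ, hεΘ0])]
  have hterm : (bEps ε / Real.sqrt ((1 - t) * a)) / (s + 4 - Θe) ≤ 3 * (t/40) := by
    rw [div_eq_mul_one_div]
    exact mul_le_mul hbq h1w (by positivity) (by norm_num)
  have hE : 1 + (9/10)*t ≤ 1 + Real.sqrt ((1 - t) * a)
      - (bEps ε / Real.sqrt ((1 - t) * a)) / (s + 4 - Θe) := by
    linarith only [hsq, hterm, ht_pos.le]
  have hE_pos : 0 < 1 + Real.sqrt ((1 - t) * a)
      - (bEps ε / Real.sqrt ((1 - t) * a)) / (s + 4 - Θe) := by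
    linarith only [hE, ht_pos.le]
  -- Z bound
  set Z := (1 / (4 * (1 + a - 2 * bEps ε / (s+3) - (1 - cEps ε) / (s+3)^2)))
    * (2 / (1 + Real.sqrt ((1 - t) * a)
        - (bEps ε / Real.sqrt ((1 - t) * a)) / (s + 4 - Θe))) with hZdef
  have hZ : Z ≤ 1 / (2 * (1 + (9/10)*t)) := by
    have hz1 : 1 / (4 * (1 + a - 2 * bEps ε / (s+3) - (1 - cEps ε) / (s+3)^2)) ≤ 1/4 :=
      one_div_le_one_div_of_le (by norm_num) (by linarith only [hD2])
    have hz2 : 2 / (1 + Real.sqrt ((1 - t) * a)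
        - (bEps ε / Real.sqrt ((1 - t) * a)) / (s + 4 - Θe)) ≤ 2 / (1 + (9/10)*t) :=
      div_le_div_of_nonneg_left (by norm_num) (by positivity) hE
    have hz3 : 0 ≤ 2 / (1 + Real.sqrt ((1 - t) * a)
        - (bEps ε / Real.sqrt ((1 - t) * a)) / (s + 4 - Θe)) := by positivity
    calc Z ≤ (1/4) * (2 / (1 + (9/10)*t)) := mul_le_mul hz1 hz2 hz3 (by norm_num)
      _ = 1 / (2 * (1 + (9/10)*t)) := by
          have hne : (1 + (9/10)*t) ≠ 0 := by positivity
          field_simp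
          ring
  have h1Z : (1 + (8/10)*t)/2 ≤ 1 - Z := by
    have key : 1 / (2 * (1 + (9/10)*t)) ≤ (1 - (8/10)*t)/2 := by
      rw [div_le_div_iff₀ (by positivity) (by norm_num)]
      nlinarith only [mul_nonneg ht_pos.le (show (0:ℝ) ≤ 1/10 - t by linarith only [ht_le]),
        sq_nonneg t]
    linarith only [hZ, key]
  have hsq2 : (1 + t)/4 ≤ (1 - Z)^2 := by
    have h7 : ((1 + (8/10)*t)/2)^2 ≤ (1 - Z)^2 :=
      pow_le_pow_left₀ (by positivity) h1Z 2
    nlinarith only [h7, ht_pos.le, sq_nonneg t]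
  -- conclude
  have hKf : 1 / (4 * (1 + a - 2 * bEps ε / (s+1) - (1 - cEps ε) / (s+1)^2)) ≤ 1/4 :=
    one_div_le_one_div_of_le (by norm_num) (by linarith only [hD1])
  calc 1 / (4 * (1 + a - 2 * bEps ε / (s+1) - (1 - cEps ε) / (s+1)^2)) / (1 - Z)^2
      ≤ (1/4) / ((1+t)/4) := div_le_div₀ (by norm_num) hKf (by positivity) hsq2
    _ = 1 / (1 + t) := by
        have hne : (1 + t) ≠ 0 := by positivity
        field_simp
    _ = 1 / (1 + 1*t) := by rw [one_mul]
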